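/- (T-biconditionality) Let U be a consistent fixed point of G. For every sentence A with #A ∈ G(U) ∪ F(U), the Gödel number of the sentence `iff A (Tr (#A))` belongs to G(U) (i.e., A ↔ T(⌜A⌝) is true). -/

import Mathlib

/-- Sentences of the augmented language 𝓛. -/
inductive Sent (B : Type) : Type where
  | base : B → Sent B
  | Tr : ℕ → Sent B
  | exT : Sent B
  | allT : Sent B
  | neg : Sent B → Sent B
  | or : Sent B → Sent B → Sent B
  | and : Sent B → Sent B → Sent B
  | imp : Sent B → Sent B → Sent B
  | iff : Sent B → Sent B → Sent B

variable {B : Type}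

mutual
/-- `isTrue gn v U A` means `#A ∈ G(U)` according to rules (r1)–(r9). -/
def isTrue (gn : Sent B → ℕ) (v : B → Bool) (U : Set ℕ) : Sent B → Prop
  | .base b => v b = true
  | .Tr n => ∃ A : Sent B, n = gn A ∧ gn A ∈ U
  | .exT => ∃ n : ℕ, ∃ A : Sent B, n = gn A ∧ gn A ∈ U
  | .allT => ∀ n : ℕ, ∃ A : Sent B, n = gn A ∧ gn A ∈ U
  | .neg A => isFalse gn v U A
  | .or A C => isTrue gn v U A ∨ isTrue gn v U C
  | .and A C => isTrue gn v U A ∧ isTrue gn v U C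
  | .imp A C => isFalse gn v U A ∨ isTrue gn v U C
  | .iff A C => (isTrue gn v U A ∧ isTrue gn v U C) ∨ (isFalse gn v U A ∧ isFalse gn v U C)

/-- `isFalse gn v U A` means `#A ∈ F(U)` according to rules (r1)–(r9). -/
def isFalse (gn : Sent B → ℕ) (v : B → Bool) (U : Set ℕ) : Sent B → Prop
  | .base b => v b = false
  | .Tr n => ∃ A : Sent B, n = gn A ∧ gn (.neg A) ∈ U
  | .exT => ∀ n : ℕ, ∃ A : Sent B, n = gn A ∧ gn (.neg A) ∈ U
  | .allT => ∃ n : ℕ, ∃ A : Sent B, n = gn A ∧ gn (.neg A) ∈ U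
  | .neg A => isTrue gn v U A
  | .or A C => isFalse gn v U A ∧ isFalse gn v U C
  | .and A C => isFalse gn v U A ∨ isFalse gn v U C
  | .imp A C => isTrue gn v U A ∧ isFalse gn v U C
  | .iff A C => (isTrue gn v U A ∧ isFalse gn v U C) ∨ (isFalse gn v U A ∧ isTrue gn v U C)
end

/-- `G U`: Gödel numbers of sentences declared true over `U`. -/
def GSet (gn : Sent B → ℕ) (v : B → Bool) (U : Set ℕ) : Set ℕ :=
  { n | ∃ A : Sent B, n = gn A ∧ isTrue gn v U A }

/-- `F U`: Gödel numbers of sentences declared false over `U`. -/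
def FSet (gn : Sent B → ℕ) (v : B → Bool) (U : Set ℕ) : Set ℕ :=
  { n | ∃ A : Sent B, n = gn A ∧ isFalse gn v U A }

/-- `U` is consistent: no sentence has both itself and its negation in `U`. -/
def Consistent (gn : Sent B → ℕ) (U : Set ℕ) : Prop :=
  ¬ ∃ A : Sent B, gn A ∈ U ∧ gn (.neg A) ∈ U

section

variable (gn : Sent B → ℕ) (v : B → Bool) {U : Set ℕ}

theorem mem_GSet_iff (hgn : Function.Injective gn) (A : Sent B) :
    gn A ∈ GSet gn v U ↔ isTrue gn v U A :=
  ⟨fun ⟨_, hC, hT⟩ => hgn hC ▸ hT, fun hT => ⟨A, rfl, hT⟩⟩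

theorem mem_FSet_iff (hgn : Function.Injective gn) (A : Sent B) :
    gn A ∈ FSet gn v U ↔ isFalse gn v U A :=
  ⟨fun ⟨_, hC, hF⟩ => hgn hC ▸ hF, fun hF => ⟨A, rfl, hF⟩⟩

variable {gn v}

theorem isTrue_Tr_self (hsound : GSet gn v U ⊆ U) {A : Sent B} (hA : isTrue gn v U A) :
    isTrue gn v U (.Tr (gn A)) :=
  ⟨A, rfl, hsound ⟨A, rfl, hA⟩⟩

theorem isFalse_Tr_self (hsound : GSet gn v U ⊆ U) {A : Sent B} (hA : isFalse gn v U A) :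
    isFalse gn v U (.Tr (gn A)) :=
  ⟨A, rfl, hsound ⟨.neg A, rfl, hA⟩⟩

end

/-- T-biconditionality: for every sentence `A` of `𝓛_U`,
`A ↔ T(⌜A⌝)` is true. -/
theorem stmt_9 {B : Type} (gn : Sent B → ℕ) (hgn : Function.Injective gn)
    (v : B → Bool) (U : Set ℕ) (hU : Consistent gn U) (hfix : GSet gn v U = U)
    (A : Sent B) (hA : gn A ∈ GSet gn v U ∪ FSet gn v U) :
    gn (Sent.iff A (.Tr (gn A))) ∈ GSet gn v U := by
  rw [mem_GSet_iff gn v hgn]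
  rcases hA with hT | hF
  · rw [mem_GSet_iff gn v hgn] at hT
    exact .inl ⟨hT, isTrue_Tr_self hfix.subset hT⟩
  · rw [mem_FSet_iff gn v hgn] at hF
    exact .inr ⟨hF, isFalse_Tr_self hfix.subset hF⟩
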